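/- arXiv:2011.05063 — 6 statements merged into one kernel-verified Lean document; each statement's English description precedes it below -/
import Mathlib

section
/- For real numbers 0 < r_1 < r_2 < r_3, the condition r_2(r_3-r_1)^3 - r_1(r_3+r_2)^3 - r_3(r_1+r_2)^3 ≥ 0 implies r_3(r_1+r_2)^3 ≤ r_2(r_3+r_1)^3. -/
theorem stmt_1 (r1 r2 r3 : ℝ) (h1 : 0 < r1) (h12 : r1 < r2) (h23 : r2 < r3)
    (h : r2 * (r3 - r1)^3 - r1 * (r3 + r2)^3 - r3 * (r1 + r2)^3 ≥ 0) :
    r3 * (r1 + r2)^3 ≤ r2 * (r3 + r1)^3 := by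
  have hp : (r3 - r1)^3 ≤ (r3 + r1)^3 :=
    pow_le_pow_left₀ (by linarith) (by linarith) 3
  have h2 : r2 * (r3 - r1)^3 ≤ r2 * (r3 + r1)^3 :=
    mul_le_mul_of_nonneg_left hp (by linarith)
  have h3 : 0 ≤ r1 * (r3 + r2)^3 := mul_nonneg h1.le (pow_nonneg (by linarith) 3)
  linarith
end

section
/- Let 0 < r_1 < r_2 < r_3. Then among the four values f(0,0) = 1/(r_2-r_1) + 1/(r_3-r_2) + 1/(r_3-r_1), f(0,π) = 1/(r_2-r_1) + 1/(r_3+r_2) + 1/(r_3+r_1), f(π,0) = 1/(r_2+r_1) + 1/(r_3+r_2) + 1/(r_3-r_1), and f(π,π) = 1/(r_2+r_1) + 1/(r_3-r_2) + 1/(r_3+r_1), the value f(π,0) is strictly the smallest. -/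
theorem stmt_5 (r1 r2 r3 : ℝ) (h1 : 0 < r1) (h12 : r1 < r2) (h23 : r2 < r3) :
    1/(r2 + r1) + 1/(r3 + r2) + 1/(r3 - r1) <
      1/(r2 - r1) + 1/(r3 - r2) + 1/(r3 - r1) ∧
    1/(r2 + r1) + 1/(r3 + r2) + 1/(r3 - r1) <
      1/(r2 - r1) + 1/(r3 + r2) + 1/(r3 + r1) ∧
    1/(r2 + r1) + 1/(r3 + r2) + 1/(r3 - r1) <
      1/(r2 + r1) + 1/(r3 - r2) + 1/(r3 + r1) := by
  have ha : 0 < r2 - r1 := by linarith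
  have hb : 0 < r3 - r2 := by linarith
  have hc : 0 < r3 - r1 := by linarith
  have hd : 0 < r2 + r1 := by linarith
  have he : 0 < r3 + r2 := by linarith
  have hf : 0 < r3 + r1 := by linarith
  refine ⟨?_, ?_, ?_⟩
  · have h1 : 1/(r2 + r1) < 1/(r2 - r1) := by
      apply one_div_lt_one_div_of_lt ha; linarith
    have h2 : 1/(r3 + r2) < 1/(r3 - r2) := by
      apply one_div_lt_one_div_of_lt hb; linarith
    linarith
  · have key : 1/(r2 + r1) + 1/(r3 - r1) < 1/(r2 - r1) + 1/(r3 + r1) := by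
      rw [div_add_div _ _ (ne_of_gt hd) (ne_of_gt hc),
          div_add_div _ _ (ne_of_gt ha) (ne_of_gt hf),
          div_lt_div_iff₀ (by positivity) (by nlinarith [mul_pos h1 h1])]
      nlinarith [mul_pos h1 hb, mul_pos (mul_pos h1 hb) hc, mul_pos hd hf]
    linarith
  · have key : 1/(r3 + r2) + 1/(r3 - r1) < 1/(r3 - r2) + 1/(r3 + r1) := by
      rw [div_add_div _ _ (ne_of_gt he) (ne_of_gt hc),
          div_add_div _ _ (ne_of_gt hb) (ne_of_gt hf),
          div_lt_div_iff₀ (by positivity) (by nlinarith [mul_pos h1 h1])]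
      nlinarith [mul_pos ha (show (0:ℝ) < r3^2 + r1*r2 by nlinarith [mul_pos h1 h1])]
    linarith
end

section
/- Let 0 < r_1 < r_2 < r_3 and let f(α,β) = F_{12}(α) + F_{13}(β) + F_{23}(α−β) where F_{ij}(θ) = (r_i² + r_j² − 2 r_i r_j cos θ)^{−1/2}. Then the determinant of the Hessian of f at (α,β) = (π,0) equals r_1 r_2 r_3 · [r_2(r_3−r_1)³ − r_1(r_3+r_2)³ − r_3(r_1+r_2)³] / [(r_1+r_2)³ (r_2+r_3)³ (r_3−r_1)³]. -/
/-!
Each pair potential `F(θ) = D(θ)^{-1/2}`, with `D(θ) = a² + b² - 2ab cos θ`, has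
`F' = -ab sin θ / D^{3/2}`. At the collinear angles `θ ∈ {0, π}` the sine vanishes, so only the
derivative of the numerator survives and `F''(θ) = -ab cos θ / D^{3/2}`, with `√D = a + b` at `π`
and `√D = b - a` at `0`. The Hessian of `f` at `(π, 0)` is therefore
`[[F₁₂'' + F₂₃'', -F₂₃''], [-F₂₃'', F₁₃'' + F₂₃'']]`, and its determinant is a rational identity.
-/

open Real

noncomputable section

/-- Squared distance between points at radii `a` and `b` separated by the angle `θ`. -/
def distSq (a b θ : ℝ) : ℝ := a ^ 2 + b ^ 2 - 2 * a * b * cos θ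

def pairPotential (a b θ : ℝ) : ℝ := 1 / √(distSq a b θ)

def pairPotentialDeriv (a b θ : ℝ) : ℝ :=
  -(a * b * sin θ) / (distSq a b θ * √(distSq a b θ))

def energy (r1 r2 r3 α β : ℝ) : ℝ :=
  pairPotential r1 r2 α + pairPotential r1 r3 β + pairPotential r2 r3 (α - β)

end

section PairPotential

variable {a b θ : ℝ}

lemma distSq_pi (a b : ℝ) : distSq a b π = (a + b) ^ 2 := by
  rw [distSq, cos_pi]; ring

lemma distSq_zero (a b : ℝ) : distSq a b 0 = (a - b) ^ 2 := by
  rw [distSq, cos_zero]; ring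

lemma distSq_pos (hab : a ≠ b) (h : 0 ≤ a * b) (θ : ℝ) : 0 < distSq a b θ := by
  have hsq : 0 < (a - b) ^ 2 := by positivity [sub_ne_zero.2 hab]
  have hdecomp : distSq a b θ = (a - b) ^ 2 + 2 * (a * b) * (1 - cos θ) := by rw [distSq]; ring
  nlinarith [cos_le_one θ]

lemma hasDerivAt_distSq (a b θ : ℝ) : HasDerivAt (distSq a b) (2 * a * b * sin θ) θ := by
  refine (((hasDerivAt_cos θ).const_mul (2 * a * b)).const_sub (a ^ 2 + b ^ 2)).congr_deriv ?_
  ring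

lemma hasDerivAt_pairPotential (h : 0 < distSq a b θ) :
    HasDerivAt (pairPotential a b) (pairPotentialDeriv a b θ) θ := by
  have hsqrt := (hasDerivAt_distSq a b θ).sqrt h.ne'
  have hpos : 0 < √(distSq a b θ) := sqrt_pos.2 h
  refine ((hasDerivAt_const θ (1 : ℝ)).div hsqrt hpos.ne').congr_deriv ?_
  rw [pairPotentialDeriv]
  field_simp
  rw [sq_sqrt h.le]
  ring

lemma hasDerivAt_pairPotentialDeriv_of_sin_eq_zero (h : 0 < distSq a b θ) (hsin : sin θ = 0) :
    HasDerivAt (pairPotentialDeriv a b)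
      (-(a * b * cos θ) / (distSq a b θ * √(distSq a b θ))) θ := by
  have hD := hasDerivAt_distSq a b θ
  have hden := hD.mul (hD.sqrt h.ne')
  have hnum := ((hasDerivAt_sin θ).const_mul (a * b)).neg
  have hne : distSq a b θ * √(distSq a b θ) ≠ 0 := (mul_pos h (sqrt_pos.2 h)).ne'
  refine (hnum.div hden hne).congr_deriv ?_
  rw [hsin, Pi.mul_apply]
  field_simp
  ring

lemma hasDerivAt_pairPotentialDeriv_pi (hab : 0 < a + b) :
    HasDerivAt (pairPotentialDeriv a b) (a * b / (a + b) ^ 3) π := by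
  have h : 0 < distSq a b π := by rw [distSq_pi]; positivity
  convert hasDerivAt_pairPotentialDeriv_of_sin_eq_zero h sin_pi using 1
  rw [distSq_pi, sqrt_sq hab.le, cos_pi]
  ring

lemma hasDerivAt_pairPotentialDeriv_pi_sub_zero (hab : 0 < a + b) :
    HasDerivAt (pairPotentialDeriv a b) (a * b / (a + b) ^ 3) (π - 0) := by
  rw [sub_zero]
  exact hasDerivAt_pairPotentialDeriv_pi hab

lemma hasDerivAt_pairPotentialDeriv_zero (hab : a < b) :
    HasDerivAt (pairPotentialDeriv a b) (-(a * b) / (b - a) ^ 3) 0 := by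
  have h : 0 < distSq a b 0 := by rw [distSq_zero]; nlinarith
  convert hasDerivAt_pairPotentialDeriv_of_sin_eq_zero h sin_zero using 1
  rw [distSq_zero, ← neg_sub b a, neg_sq, sqrt_sq (sub_pos.2 hab).le, cos_zero]
  ring

end PairPotential

section Hessian

variable {r1 r2 r3 : ℝ}

lemma hasDerivAt_energy_fst (h1 : 0 < r1) (h12 : r1 < r2) (h23 : r2 < r3) (α β : ℝ) :
    HasDerivAt (fun α => energy r1 r2 r3 α β)
      (pairPotentialDeriv r1 r2 α + pairPotentialDeriv r2 r3 (α - β)) α := by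
  have h2 : 0 < r2 := h1.trans h12
  have h3 : 0 < r3 := h2.trans h23
  exact ((hasDerivAt_pairPotential (distSq_pos h12.ne (by positivity) α)).add_const _).add
    ((hasDerivAt_pairPotential (distSq_pos h23.ne (by positivity) (α - β))).comp_sub_const α β)

lemma hasDerivAt_energy_snd (h1 : 0 < r1) (h12 : r1 < r2) (h23 : r2 < r3) (α β : ℝ) :
    HasDerivAt (fun β => energy r1 r2 r3 α β)
      (pairPotentialDeriv r1 r3 β - pairPotentialDeriv r2 r3 (α - β)) β := by
  have h2 : 0 < r2 := h1.trans h12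
  have h3 : 0 < r3 := h2.trans h23
  have h13 := (hasDerivAt_pairPotential (distSq_pos (h12.trans h23).ne (by positivity) β))
  have h23' := (hasDerivAt_pairPotential (distSq_pos h23.ne (by positivity) (α - β)))
  refine ((h13.const_add _).add (h23'.comp_const_sub α β)).congr_deriv ?_
  ring

lemma deriv_deriv_energy_fst (h1 : 0 < r1) (h12 : r1 < r2) (h23 : r2 < r3) :
    deriv (fun a => deriv (fun a' => energy r1 r2 r3 a' 0) a) π =
      r1 * r2 / (r1 + r2) ^ 3 + r2 * r3 / (r2 + r3) ^ 3 := by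
  have h2 : 0 < r2 := h1.trans h12
  have h3 : 0 < r3 := h2.trans h23
  have hfirst : (fun a => deriv (fun a' => energy r1 r2 r3 a' 0) a) =
      fun a => pairPotentialDeriv r1 r2 a + pairPotentialDeriv r2 r3 (a - 0) :=
    funext fun a => (hasDerivAt_energy_fst h1 h12 h23 a 0).deriv
  rw [hfirst]
  exact ((hasDerivAt_pairPotentialDeriv_pi (by positivity)).add
    ((hasDerivAt_pairPotentialDeriv_pi_sub_zero (by positivity)).comp_sub_const π 0)).deriv

lemma deriv_deriv_energy_snd (h1 : 0 < r1) (h12 : r1 < r2) (h23 : r2 < r3) :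
    deriv (fun b => deriv (fun b' => energy r1 r2 r3 π b') b) 0 =
      -(r1 * r3) / (r3 - r1) ^ 3 + r2 * r3 / (r2 + r3) ^ 3 := by
  have h2 : 0 < r2 := h1.trans h12
  have h3 : 0 < r3 := h2.trans h23
  have hfirst : (fun b => deriv (fun b' => energy r1 r2 r3 π b') b) =
      fun b => pairPotentialDeriv r1 r3 b - pairPotentialDeriv r2 r3 (π - b) :=
    funext fun b => (hasDerivAt_energy_snd h1 h12 h23 π b).deriv
  rw [hfirst]
  have h23π := (hasDerivAt_pairPotentialDeriv_pi_sub_zero (a := r2) (b := r3)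
    (by positivity)).comp_const_sub π 0
  refine ((hasDerivAt_pairPotentialDeriv_zero (h12.trans h23)).sub h23π).deriv.trans ?_
  ring

lemma deriv_deriv_energy_fst_snd (h1 : 0 < r1) (h12 : r1 < r2) (h23 : r2 < r3) :
    deriv (fun b => deriv (fun a => energy r1 r2 r3 a b) π) 0 = -(r2 * r3 / (r2 + r3) ^ 3) := by
  have h2 : 0 < r2 := h1.trans h12
  have h3 : 0 < r3 := h2.trans h23
  have hfirst : (fun b => deriv (fun a => energy r1 r2 r3 a b) π) =
      fun b => pairPotentialDeriv r1 r2 π + pairPotentialDeriv r2 r3 (π - b) :=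
    funext fun b => (hasDerivAt_energy_fst h1 h12 h23 π b).deriv
  rw [hfirst]
  have h23π := (hasDerivAt_pairPotentialDeriv_pi_sub_zero (a := r2) (b := r3)
    (by positivity)).comp_const_sub π 0
  exact (h23π.const_add _).deriv

end Hessian

theorem stmt_8 (r1 r2 r3 : ℝ) (h1 : 0 < r1) (h12 : r1 < r2) (h23 : r2 < r3) :
    let F : ℝ → ℝ → ℝ → ℝ := fun ri rj θ =>
      1 / Real.sqrt (ri^2 + rj^2 - 2 * ri * rj * Real.cos θ)
    let f : ℝ → ℝ → ℝ := fun α β => F r1 r2 α + F r1 r3 β + F r2 r3 (α - β)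
    let fαα : ℝ := deriv (fun a => deriv (fun a' => f a' 0) a) Real.pi
    let fββ : ℝ := deriv (fun b => deriv (fun b' => f Real.pi b') b) 0
    let fαβ : ℝ := deriv (fun b => deriv (fun a => f a b) Real.pi) 0
    fαα * fββ - fαβ^2 =
      r1 * r2 * r3 * (r2 * (r3 - r1)^3 - r1 * (r3 + r2)^3 - r3 * (r1 + r2)^3) /
        ((r1 + r2)^3 * (r2 + r3)^3 * (r3 - r1)^3) := by
  intro F f fαα fββ fαβ
  have hαα : fαα = r1 * r2 / (r1 + r2) ^ 3 + r2 * r3 / (r2 + r3) ^ 3 :=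
    deriv_deriv_energy_fst h1 h12 h23
  have hββ : fββ = -(r1 * r3) / (r3 - r1) ^ 3 + r2 * r3 / (r2 + r3) ^ 3 :=
    deriv_deriv_energy_snd h1 h12 h23
  have hαβ : fαβ = -(r2 * r3 / (r2 + r3) ^ 3) := deriv_deriv_energy_fst_snd h1 h12 h23
  have h12' : 0 < r1 + r2 := by linarith
  have h23' : 0 < r2 + r3 := by linarith
  have h13' : 0 < r3 - r1 := by linarith
  rw [hαα, hββ, hαβ]
  field_simp
  ring
end

section
/- For 0 < r_1 < r_2 and r_3 > 0, the inequality r_2(r_3−r_1)³ − r_1(r_3+r_2)³ − r_3(r_1+r_2)³ ≥ 0 holds if and only if r_3 ≥ φ(r_1, r_2), where φ(r_1, r_2) = (5 r_1 r_2 + r_2² + (r_1+r_2)√(r_2² + 12 r_1 r_2 − 4 r_1²))/(2(r_2−r_1)). -/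
theorem stmt_15 (r1 r2 r3 : ℝ) (h1 : 0 < r1) (h12 : r1 < r2) (h3 : 0 < r3) :
    r2 * (r3 - r1)^3 - r1 * (r3 + r2)^3 - r3 * (r1 + r2)^3 ≥ 0 ↔
      r3 ≥ (5 * r1 * r2 + r2^2 + (r1 + r2) * Real.sqrt (r2^2 + 12 * r1 * r2 - 4 * r1^2)) /
        (2 * (r2 - r1)) := by
  have hD : (0:ℝ) < r2^2 + 12 * r1 * r2 - 4 * r1^2 := by nlinarith
  set s := Real.sqrt (r2^2 + 12 * r1 * r2 - 4 * r1^2) with hsdef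
  have hs2 : s^2 = r2^2 + 12 * r1 * r2 - 4 * r1^2 := Real.sq_sqrt hD.le
  have hs : 0 < s := Real.sqrt_pos.mpr hD
  have hden : (0:ℝ) < 2 * (r2 - r1) := by linarith
  have h32 : (0:ℝ) < r3 + r2 := by linarith
  -- factorization
  have hfac : r2 * (r3 - r1)^3 - r1 * (r3 + r2)^3 - r3 * (r1 + r2)^3 =
      (r3 + r2) * ((r2 - r1) * r3^2 - (5 * r1 * r2 + r2^2) * r3 - r1 * (r1^2 + r2^2)) := by
    ring
  -- key: (r1+r2)*s > 5*r1*r2 + r2^2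
  have hkey : 5 * r1 * r2 + r2^2 < (r1 + r2) * s := by
    have he : ((r1 + r2) * s)^2 = (r1 + r2)^2 * (r2^2 + 12 * r1 * r2 - 4 * r1^2) := by
      rw [mul_pow, hs2]
    have hsq : (5 * r1 * r2 + r2^2)^2 < ((r1 + r2) * s)^2 := by
      nlinarith [he, mul_pos (mul_pos h1 (sub_pos.mpr h12))
        (by positivity : (0:ℝ) < r1^2 + r2^2)]
    exact lt_of_pow_lt_pow_left₀ 2 (mul_nonneg (by linarith) hs.le) hsq
  constructor
  · intro h
    rw [hfac] at h
    have hq : 0 ≤ (r2 - r1) * r3^2 - (5 * r1 * r2 + r2^2) * r3 - r1 * (r1^2 + r2^2) :=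
      nonneg_of_mul_nonneg_right h h32
    have hA : 0 < 2 * (r2 - r1) * r3 - (5 * r1 * r2 + r2^2) := by
      by_contra hA
      push_neg at hA
      nlinarith [hq, hs2, hkey, mul_pos (by linarith : (0:ℝ) < r1 + r2) hs]
    have hAs : (r1 + r2) * s ≤ 2 * (r2 - r1) * r3 - (5 * r1 * r2 + r2^2) := by
      nlinarith [hq, hs2, mul_pos (by linarith : (0:ℝ) < r1 + r2) hs]
    rw [ge_iff_le, div_le_iff₀ hden]
    linarith
  · intro h
    rw [ge_iff_le, div_le_iff₀ hden] at h
    have hAs : (r1 + r2) * s ≤ 2 * (r2 - r1) * r3 - (5 * r1 * r2 + r2^2) := by linarith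
    have hq : 0 ≤ (r2 - r1) * r3^2 - (5 * r1 * r2 + r2^2) * r3 - r1 * (r1^2 + r2^2) := by
      nlinarith [hs2, mul_pos (by linarith : (0:ℝ) < r1 + r2) hs]
    rw [hfac]
    positivity
end

section
/- The function φ(r_1, r_2) = (5 r_1 r_2 + r_2² + (r_1+r_2)√(r_2² + 12 r_1 r_2 − 4 r_1²))/(2(r_2−r_1)) is strictly increasing in r_1 on the domain 0 < r_1 < r_2, for each fixed r_2 > 0. -/
theorem stmt_16 (r2 : ℝ) (h2 : 0 < r2) (r1 r1' : ℝ) (h1 : 0 < r1) (h11 : r1 < r1')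
    (h12 : r1' < r2) :
    (5 * r1 * r2 + r2^2 + (r1 + r2) * Real.sqrt (r2^2 + 12 * r1 * r2 - 4 * r1^2)) /
        (2 * (r2 - r1)) <
      (5 * r1' * r2 + r2^2 + (r1' + r2) * Real.sqrt (r2^2 + 12 * r1' * r2 - 4 * r1'^2)) /
        (2 * (r2 - r1')) := by
  have h1' : 0 < r1' := h1.trans h11
  have hD : 0 < r2^2 + 12 * r1 * r2 - 4 * r1^2 := by nlinarith
  have hlt : r2^2 + 12 * r1 * r2 - 4 * r1^2 < r2^2 + 12 * r1' * r2 - 4 * r1'^2 := by nlinarith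
  have hs := Real.sqrt_lt_sqrt hD.le hlt
  have hs0 : 0 < Real.sqrt (r2^2 + 12 * r1 * r2 - 4 * r1^2) := Real.sqrt_pos.2 hD
  set s := Real.sqrt (r2^2 + 12 * r1 * r2 - 4 * r1^2)
  set s' := Real.sqrt (r2^2 + 12 * r1' * r2 - 4 * r1'^2)
  have hden : 0 < 2 * (r2 - r1) := by linarith
  have hden' : 0 < 2 * (r2 - r1') := by linarith
  rw [div_lt_div_iff₀ hden hden']
  nlinarith [mul_pos hs0 (sub_pos.2 h11), mul_pos (hs0.trans hs) (sub_pos.2 (h1.trans h11)),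
    mul_pos (sub_pos.2 hs) (sub_pos.2 h12), mul_pos hs0 h2, mul_pos (hs0.trans hs) h2]
end

section
/- Let x_1 < x_2 < x_3 < x_4 < x_5 < x_6 be six real numbers and let c(a,b,c) = 1/|b−a| + 1/|c−a| + 1/|c−b| be the one-dimensional three-particle Coulomb cost. Then c(x_1,x_3,x_5) + c(x_2,x_4,x_6) < c(x_1,x_3,x_6) + c(x_2,x_4,x_5). -/
lemma key_aux (a b p q : ℝ) (hab : a < b) (hbp : b < p) (hpq : p < q) :
    1/(p-a) + 1/(q-b) < 1/(q-a) + 1/(p-b) := by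
  have h1 : (0:ℝ) < p - a := by linarith
  have h2 : (0:ℝ) < q - a := by linarith
  have h3 : (0:ℝ) < p - b := by linarith
  have h4 : (0:ℝ) < q - b := by linarith
  rw [div_add_div _ _ (ne_of_gt h1) (ne_of_gt h4), div_add_div _ _ (ne_of_gt h2) (ne_of_gt h3),
    div_lt_div_iff₀ (by positivity) (by positivity)]
  nlinarith [mul_pos h1 h4, mul_pos h2 h3, mul_pos (sub_pos.2 hab) (sub_pos.2 hpq)]

theorem stmt_19 (x1 x2 x3 x4 x5 x6 : ℝ) (h12 : x1 < x2) (h23 : x2 < x3)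
    (h34 : x3 < x4) (h45 : x4 < x5) (h56 : x5 < x6) :
    let c : ℝ → ℝ → ℝ → ℝ := fun a b d => 1 / |b - a| + 1 / |d - a| + 1 / |d - b|
    c x1 x3 x5 + c x2 x4 x6 < c x1 x3 x6 + c x2 x4 x5 := by
  intro c
  simp only [c]
  rw [abs_of_pos (by linarith : (0:ℝ) < x3 - x1), abs_of_pos (by linarith : (0:ℝ) < x5 - x1),
    abs_of_pos (by linarith : (0:ℝ) < x5 - x3), abs_of_pos (by linarith : (0:ℝ) < x4 - x2),
    abs_of_pos (by linarith : (0:ℝ) < x6 - x2), abs_of_pos (by linarith : (0:ℝ) < x6 - x4),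
    abs_of_pos (by linarith : (0:ℝ) < x6 - x1), abs_of_pos (by linarith : (0:ℝ) < x6 - x3),
    abs_of_pos (by linarith : (0:ℝ) < x5 - x2), abs_of_pos (by linarith : (0:ℝ) < x5 - x4)]
  have k1 := key_aux x1 x2 x5 x6 h12 (by linarith) h56
  have k2 := key_aux x3 x4 x5 x6 h34 h45 h56
  linarith
end
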